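/- With the Moser sequence u_n as defined (N ≥ 2, 0 ≤ β < N), the L^N norm satisfies ‖u_n‖_{L^N}^N ≤ C/n for some constant C = C(N, β) > 0 and all n large, hence ‖u_n‖_{L^N} → 0 as n → ∞. -/

import Mathlib

open MeasureTheory Real Filter

noncomputable section

/-- ω_{N-1} = N π^{N/2} / Γ(N/2 + 1), the surface area of the unit sphere in ℝ^N. -/
def sphereArea (N : ℕ) : ℝ := N * Real.pi ^ ((N : ℝ) / 2) / Real.Gamma ((N : ℝ) / 2 + 1)

/-- The Moser sequence u_n. -/
def moser (N : ℕ) (β : ℝ) (n : ℕ) (x : EuclideanSpace ℝ (Fin N)) : ℝ :=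
  if 1 ≤ ‖x‖ then 0
  else if Real.exp (-(n : ℝ) / ((N : ℝ) - β)) < ‖x‖ then
    (((N : ℝ) - β) / (sphereArea N * n)) ^ ((N : ℝ)⁻¹) * Real.log (1 / ‖x‖)
  else (1 / sphereArea N) ^ ((N : ℝ)⁻¹) * ((n : ℝ) / ((N : ℝ) - β)) ^ (((N : ℝ) - 1) / N)

/-- The radial profile of the Moser sequence. -/
def rprof (N : ℕ) (β : ℝ) (n : ℕ) (y : ℝ) : ℝ :=
  if 1 ≤ y then 0
  else if Real.exp (-(n : ℝ) / ((N : ℝ) - β)) < y then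
    (((N : ℝ) - β) / (sphereArea N * n)) ^ ((N : ℝ)⁻¹) * Real.log (1 / y)
  else (1 / sphereArea N) ^ ((N : ℝ)⁻¹) * ((n : ℝ) / ((N : ℝ) - β)) ^ (((N : ℝ) - 1) / N)

lemma sphereArea_pos {N : ℕ} (hN : 2 ≤ N) : 0 < sphereArea N := by
  have h1 : 0 < Real.Gamma ((N : ℝ) / 2 + 1) := Real.Gamma_pos_of_pos (by positivity)
  have h2 : 0 < Real.pi ^ ((N : ℝ) / 2) := Real.rpow_pos_of_pos Real.pi_pos _
  have h3 : (0 : ℝ) < N := by exact_mod_cast Nat.lt_of_lt_of_le (by norm_num) hN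
  unfold sphereArea
  positivity

/-- The key pointwise bound on the radial integrand. -/
lemma rprof_bound {N : ℕ} (hN : 2 ≤ N) {β : ℝ} (hβ0 : 0 ≤ β) (hβ : β < N)
    {n : ℕ} (hn : 1 ≤ n) {y : ℝ} (hy : 0 < y) :
    y ^ (N - 1) * |rprof N β n y| ^ N ≤
      Set.indicator (Set.Ioo (0 : ℝ) 1)
        (fun _ => (((N : ℝ) - β) * (2 * N / ((N : ℝ) - β)) ^ N / sphereArea N
                   + ((N : ℝ) - β) * (2 * N) ^ N / sphereArea N) / n) y := by
  have hω : 0 < sphereArea N := sphereArea_pos hN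
  have hNR : (2 : ℝ) ≤ (N : ℝ) := by exact_mod_cast hN
  have hD : (0 : ℝ) < (N : ℝ) - β := by linarith
  have hnR : (0 : ℝ) < (n : ℝ) := by exact_mod_cast hn
  have hNne : (N : ℝ) ≠ 0 := by linarith
  set D : ℝ := (N : ℝ) - β with hDdef
  set ω : ℝ := sphereArea N with hωdef
  have hC1 : 0 ≤ D * (2 * N / D) ^ N / ω := by positivity
  have hC2 : 0 ≤ D * (2 * N) ^ N / ω := by positivity
  by_cases hy1 : 1 ≤ y
  · -- outside the unit ball: profile vanishes
    rw [rprof, if_pos hy1]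
    rw [Set.indicator_of_notMem (by simp [Set.mem_Ioo]; intro _; linarith)]
    simp [abs_zero, zero_pow (by omega : N ≠ 0)]
  · push_neg at hy1
    rw [Set.indicator_of_mem (Set.mem_Ioo.mpr ⟨hy, hy1⟩)]
    rw [rprof, if_neg (by linarith)]
    by_cases hmid : Real.exp (-(n : ℝ) / D) < y
    · -- middle annulus
      rw [if_pos hmid]
      have hX : (0 : ℝ) ≤ D / (ω * n) := by positivity
      have hlog : 0 ≤ Real.log (1 / y) := Real.log_nonneg (one_le_one_div hy hy1.le)
      -- |c * log|^N = (D/(ωn)) * log^N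
      have hcN : ((D / (ω * n)) ^ ((N : ℝ)⁻¹)) ^ N = D / (ω * n) := by
        rw [← Real.rpow_natCast ((D / (ω * n)) ^ ((N : ℝ)⁻¹)) N, ← Real.rpow_mul hX,
          inv_mul_cancel₀ hNne, Real.rpow_one]
      have habs2 : |(D / (ω * n)) ^ ((N : ℝ)⁻¹) * Real.log (1 / y)| ^ N
          = (D / (ω * n)) * Real.log (1 / y) ^ N := by
        rw [abs_mul, abs_of_nonneg (Real.rpow_nonneg hX _), abs_of_nonneg hlog, mul_pow, hcN]
      rw [habs2]
      -- log(1/y) ≤ 2N * y^(-(2N)⁻¹)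
      have hkey : Real.log (1 / y) ≤ 2 * N * y ^ (-(2 * (N : ℝ))⁻¹) := by
        have h1 : Real.log (1 / y) = 2 * N * Real.log (y ^ (-(2 * (N : ℝ))⁻¹)) := by
          rw [Real.log_rpow hy, one_div, Real.log_inv]
          field_simp
        rw [h1]
        have h2 : Real.log (y ^ (-(2 * (N : ℝ))⁻¹)) ≤ y ^ (-(2 * (N : ℝ))⁻¹) :=
          Real.log_le_self (Real.rpow_nonneg hy.le _)
        nlinarith [Real.rpow_nonneg hy.le (-(2 * (N : ℝ))⁻¹)]
      have hpow : Real.log (1 / y) ^ N ≤ (2 * N) ^ N * y ^ (-(2 : ℝ)⁻¹) := by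
        calc Real.log (1 / y) ^ N ≤ (2 * N * y ^ (-(2 * (N : ℝ))⁻¹)) ^ N :=
              pow_le_pow_left₀ hlog hkey N
          _ = (2 * N) ^ N * (y ^ (-(2 * (N : ℝ))⁻¹)) ^ N := mul_pow _ _ _
          _ = (2 * N) ^ N * y ^ (-(2 : ℝ)⁻¹) := by
              have he : -(2 * (N : ℝ))⁻¹ * (N : ℕ) = -(2 : ℝ)⁻¹ := by
                field_simp
              rw [← Real.rpow_natCast (y ^ (-(2 * (N : ℝ))⁻¹)) N, ← Real.rpow_mul hy.le, he]
      have hyy : (y : ℝ) ^ (N - 1) * y ^ (-(2 : ℝ)⁻¹) ≤ 1 := by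
        have : (y : ℝ) ^ (N - 1) * y ^ (-(2 : ℝ)⁻¹) = y ^ (((N : ℝ) - 1) + -(2 : ℝ)⁻¹) := by
          rw [Real.rpow_add hy, ← Real.rpow_natCast y (N - 1)]
          congr 2
          push_cast [Nat.cast_sub (by omega : 1 ≤ N)]
          ring
        rw [this]
        exact Real.rpow_le_one hy.le hy1.le (by linarith)
      have hyp : (0:ℝ) ≤ y ^ (N-1) := by positivity
      calc y ^ (N - 1) * (D / (ω * n) * Real.log (1 / y) ^ N)
          ≤ y ^ (N - 1) * (D / (ω * n) * ((2 * N) ^ N * y ^ (-(2 : ℝ)⁻¹))) := by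
            apply mul_le_mul_of_nonneg_left _ hyp
            exact mul_le_mul_of_nonneg_left hpow hX
        _ = (D * (2 * N) ^ N / ω / n) * (y ^ (N - 1) * y ^ (-(2 : ℝ)⁻¹)) := by ring
        _ ≤ (D * (2 * N) ^ N / ω / n) * 1 := by
            have hK : (0:ℝ) ≤ D * (2 * N) ^ N / ω / n := by positivity
            exact mul_le_mul_of_nonneg_left hyy hK
        _ = (D * (2 * N) ^ N / ω) / n := by rw [mul_one]
        _ ≤ (D * (2 * N / D) ^ N / ω + D * (2 * N) ^ N / ω) / n := by
            gcongr
            linarith [hC1]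
    · -- inner ball
      rw [if_neg hmid]
      push_neg at hmid
      set s : ℝ := (n : ℝ) / D with hsdef
      have hs : 0 < s := by positivity
      have h1ω : (0:ℝ) ≤ 1 / ω := by positivity
      have hwN : ((1 / ω) ^ ((N : ℝ)⁻¹)) ^ N = 1 / ω := by
        rw [← Real.rpow_natCast ((1 / ω) ^ ((N : ℝ)⁻¹)) N, ← Real.rpow_mul h1ω,
          inv_mul_cancel₀ hNne, Real.rpow_one]
      have hsN : (s ^ (((N : ℝ) - 1) / N)) ^ N = s ^ (N - 1) := by
        rw [← Real.rpow_natCast (s ^ (((N : ℝ) - 1) / N)) N, ← Real.rpow_mul hs.le,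
          div_mul_cancel₀ _ hNne, ← Real.rpow_natCast s (N - 1)]
        congr 1
        push_cast [Nat.cast_sub (by omega : 1 ≤ N)]
        ring
      have habs : |(1 / ω) ^ ((N : ℝ)⁻¹) * s ^ (((N : ℝ) - 1) / N)| ^ N
          = (1 / ω) * s ^ (N - 1) := by
        rw [abs_mul, abs_of_nonneg (Real.rpow_nonneg h1ω _),
          abs_of_nonneg (Real.rpow_nonneg hs.le _), mul_pow, hwN, hsN]
      rw [habs]
      -- y^(N-1) ≤ exp(-n/2)
      have hya : y ^ (N - 1) ≤ Real.exp (-(n : ℝ) / 2) := by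
        calc y ^ (N - 1) ≤ Real.exp (-(n : ℝ) / D) ^ (N - 1) :=
              pow_le_pow_left₀ hy.le hmid (N - 1)
          _ = Real.exp (((N - 1 : ℕ) : ℝ) * (-(n : ℝ) / D)) := (Real.exp_nat_mul _ _).symm
          _ ≤ Real.exp (-(n : ℝ) / 2) := by
              apply Real.exp_le_exp.mpr
              have hcast : ((N - 1 : ℕ) : ℝ) = (N : ℝ) - 1 := by
                push_cast [Nat.cast_sub (by omega : 1 ≤ N)]; ring
              rw [hcast]
              have hkey : (n : ℝ) / 2 ≤ ((N : ℝ) - 1) * (n : ℝ) / D := by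
                rw [div_le_div_iff₀ (by norm_num : (0:ℝ) < 2) hD]
                nlinarith [mul_le_mul_of_nonneg_left
                  (show D ≤ 2 * ((N : ℝ) - 1) by simp only [hDdef]; linarith) hnR.le]
              have heq : ((N : ℝ) - 1) * (-(n : ℝ) / D) = -(((N : ℝ) - 1) * (n : ℝ) / D) := by
                ring
              have heq2 : -(n : ℝ) / 2 = -((n : ℝ) / 2) := by ring
              rw [heq, heq2]
              exact neg_le_neg hkey
      -- s^(N-1) * n ≤ D * (2N/D)^N * exp(n/2)
      have hsb : s ^ (N - 1) * n ≤ D * (2 * N / D) ^ N * Real.exp ((n : ℝ) / 2) := by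
        have ht : (n : ℝ) / (2 * N) ≤ Real.exp ((n : ℝ) / (2 * N)) := by
          have := Real.add_one_le_exp ((n : ℝ) / (2 * N)); linarith
        have hsplit : s = (2 * N / D) * ((n : ℝ) / (2 * N)) := by
          rw [hsdef]
          field_simp
        have h1 : s ^ (N - 1) * n = D * s ^ N := by
          have : (n : ℝ) = s * D := by rw [hsdef]; field_simp
          rw [this]
          have hNsucc : N = (N - 1) + 1 := by omega
          calc s ^ (N - 1) * (s * D) = s ^ ((N - 1) + 1) * D := by ring
            _ = D * s ^ N := by rw [← hNsucc]; ring
        have h2 : s ^ N ≤ (2 * N / D) ^ N * Real.exp ((n : ℝ) / 2) := by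
          calc s ^ N = (2 * N / D) ^ N * ((n : ℝ) / (2 * N)) ^ N := by
                rw [hsplit, mul_pow]
            _ ≤ (2 * N / D) ^ N * Real.exp ((n : ℝ) / (2 * N)) ^ N := by
                apply mul_le_mul_of_nonneg_left _ (by positivity)
                exact pow_le_pow_left₀ (by positivity) ht N
            _ = (2 * N / D) ^ N * Real.exp ((n : ℝ) / 2) := by
                rw [← Real.exp_nat_mul]
                congr 2
                field_simp
        calc s ^ (N - 1) * n = D * s ^ N := h1
          _ ≤ D * ((2 * N / D) ^ N * Real.exp ((n : ℝ) / 2)) :=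
              mul_le_mul_of_nonneg_left h2 hD.le
          _ = D * (2 * N / D) ^ N * Real.exp ((n : ℝ) / 2) := by ring
      have hsb' : s ^ (N - 1) ≤ D * (2 * N / D) ^ N * Real.exp ((n : ℝ) / 2) / n :=
        (le_div_iff₀ hnR).mpr hsb
      calc y ^ (N - 1) * (1 / ω * s ^ (N - 1))
          ≤ Real.exp (-(n : ℝ) / 2) * (1 / ω * (D * (2 * N / D) ^ N * Real.exp ((n : ℝ) / 2) / n)) := by
            apply mul_le_mul hya _ (by positivity) (by positivity)
            exact mul_le_mul_of_nonneg_left hsb' h1ω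
        _ = (D * (2 * N / D) ^ N / ω / n) * (Real.exp (-(n : ℝ) / 2) * Real.exp ((n : ℝ) / 2)) := by
            ring
        _ = D * (2 * N / D) ^ N / ω / n := by
            have hz : -(n : ℝ) / 2 + (n : ℝ) / 2 = 0 := by ring
            rw [← Real.exp_add, hz, Real.exp_zero, mul_one]
        _ ≤ (D * (2 * N / D) ^ N / ω + D * (2 * N) ^ N / ω) / n := by
            gcongr
            linarith [hC2]

/-- ‖u_n‖_{L^N}^N ≤ C/n for large n, hence ‖u_n‖_{L^N} → 0. -/
theorem moser_LN_norm_decay {N : ℕ} (hN : 2 ≤ N) (β : ℝ)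
    (hβ0 : 0 ≤ β) (hβ : β < N) :
    (∃ C : ℝ, 0 < C ∧ ∃ M : ℕ, ∀ n : ℕ, M ≤ n →
      (∫ x : EuclideanSpace ℝ (Fin N), |moser N β n x| ^ N) ≤ C / n) ∧
    Tendsto (fun n : ℕ =>
        (∫ x : EuclideanSpace ℝ (Fin N), |moser N β n x| ^ N) ^ ((N : ℝ)⁻¹))
      atTop (nhds 0) := by
  have hω : 0 < sphereArea N := sphereArea_pos hN
  have hNR : (2 : ℝ) ≤ (N : ℝ) := by exact_mod_cast hN
  have hD : (0 : ℝ) < (N : ℝ) - β := by linarith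
  haveI : Nontrivial (EuclideanSpace ℝ (Fin N)) :=
    Module.nontrivial_of_finrank_pos (R := ℝ)
      (by rw [finrank_euclideanSpace_fin]; omega)
  set κ : ℝ := (volume (Metric.ball (0 : EuclideanSpace ℝ (Fin N)) 1)).toReal with hκdef
  have hκ0 : 0 ≤ κ := ENNReal.toReal_nonneg
  set K : ℝ := ((N : ℝ) - β) * (2 * N / ((N : ℝ) - β)) ^ N / sphereArea N
               + ((N : ℝ) - β) * (2 * N) ^ N / sphereArea N with hKdef
  have hK0 : 0 ≤ K := by positivity
  set C : ℝ := N * κ * K + 1 with hCdef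
  have hNκK : 0 ≤ (N : ℝ) * κ * K := by positivity
  have hC0 : 0 < C := by linarith
  have hbound : ∀ n : ℕ, 1 ≤ n →
      (∫ x : EuclideanSpace ℝ (Fin N), |moser N β n x| ^ N) ≤ C / n := by
    intro n hn
    have hnR : (0 : ℝ) < (n : ℝ) := by exact_mod_cast hn
    have hrad := MeasureTheory.integral_fun_norm_addHaar
      (volume : Measure (EuclideanSpace ℝ (Fin N))) (fun y => |rprof N β n y| ^ N)
    rw [finrank_euclideanSpace_fin] at hrad
    have hint : (∫ y in Set.Ioi (0 : ℝ), y ^ (N - 1) • |rprof N β n y| ^ N) ≤ K / n := by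
      have hInt : Integrable (Set.indicator (Set.Ioo (0 : ℝ) 1) (fun _ => K / n))
          (volume.restrict (Set.Ioi (0 : ℝ))) :=
        (((integrableOn_const_iff).mpr (Or.inr measure_Ioo_lt_top)).integrable_indicator
          measurableSet_Ioo).restrict
      have hle := integral_mono_of_nonneg
        (f := fun y => y ^ (N - 1) • |rprof N β n y| ^ N)
        ((ae_restrict_iff' measurableSet_Ioi).mpr (ae_of_all _ fun y hy => by
          simp only [Pi.zero_apply, smul_eq_mul]
          exact mul_nonneg (pow_nonneg (le_of_lt hy) _) (pow_nonneg (abs_nonneg _) _)))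
        hInt
        ((ae_restrict_iff' measurableSet_Ioi).mpr (ae_of_all _ fun y hy => by
          simpa [smul_eq_mul] using rprof_bound hN hβ0 hβ hn hy))
      refine hle.trans ?_
      rw [integral_indicator measurableSet_Ioo, Measure.restrict_restrict measurableSet_Ioo,
        Set.inter_eq_left.mpr (fun y hy => hy.1), setIntegral_const, Real.volume_real_Ioo]
      norm_num
    calc (∫ x : EuclideanSpace ℝ (Fin N), |moser N β n x| ^ N)
        = ∫ x : EuclideanSpace ℝ (Fin N), |rprof N β n ‖x‖| ^ N := rfl
      _ = N • κ • ∫ y in Set.Ioi (0 : ℝ), y ^ (N - 1) • |rprof N β n y| ^ N := hrad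
      _ = (N : ℝ) * (κ * ∫ y in Set.Ioi (0 : ℝ), y ^ (N - 1) • |rprof N β n y| ^ N) := by
          rw [nsmul_eq_mul, smul_eq_mul]
      _ ≤ (N : ℝ) * (κ * (K / n)) := by
          refine mul_le_mul_of_nonneg_left (mul_le_mul_of_nonneg_left hint hκ0) ?_
          positivity
      _ = ((N : ℝ) * κ * K) / n := by ring
      _ ≤ C / n := by gcongr; linarith
  refine ⟨⟨C, hC0, 1, hbound⟩, ?_⟩
  have h0 : ∀ n : ℕ, 0 ≤ ∫ x : EuclideanSpace ℝ (Fin N), |moser N β n x| ^ N :=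
    fun n => integral_nonneg fun x => by positivity
  have h1 : Tendsto (fun n : ℕ => ∫ x : EuclideanSpace ℝ (Fin N), |moser N β n x| ^ N)
      atTop (nhds 0) :=
    squeeze_zero' (Eventually.of_forall h0)
      (eventually_atTop.mpr ⟨1, hbound⟩) (tendsto_const_div_atTop_nhds_zero_nat C)
  have h2 := h1.rpow_const (p := (N : ℝ)⁻¹) (Or.inr (by positivity))
  rwa [Real.zero_rpow (inv_ne_zero (Nat.cast_ne_zero.mpr (by omega)))] at h2
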